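/- With P⁼ the equality projector on two n-qubit registers X,Y and P̄ = |Φ⟩⟨Φ| the uniform-superposition projector on Y, the operator norm of the commutator [P⁼, 1_X ⊗ P̄] is at most 2·2^{−n/2}. -/

import Mathlib

/-- The equality projector on two `n`-qubit registers `X, Y`:
`P⁼ = ∑_x |x⟩⟨x|_X ⊗ |x⟩⟨x|_Y`. -/
noncomputable def eqProj (n : ℕ) :
    Matrix ((Fin n → Bool) × (Fin n → Bool)) ((Fin n → Bool) × (Fin n → Bool)) ℂ :=
  fun p q => if p.1 = p.2 ∧ q = p then 1 else 0

/-- The projector `1_X ⊗ |Φ⟩⟨Φ|_Y` where `|Φ⟩ = 2^{−n/2} ∑_x |x⟩` is the uniform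
superposition on the `n`-qubit register `Y`. -/
noncomputable def unifProjY (n : ℕ) :
    Matrix ((Fin n → Bool) × (Fin n → Bool)) ((Fin n → Bool) × (Fin n → Bool)) ℂ :=
  fun p q => if p.1 = q.1 then ((2 : ℂ) ^ n)⁻¹ else 0

/-!
Write `P = P⁼` and `Q = 1_X ⊗ |Φ⟩⟨Φ|`. Both are orthogonal projections, so `QP = (PQ)*` and
`‖[P, Q]‖ ≤ 2‖PQ‖`, while the C*-identity gives `‖PQ‖² = ‖QPQ‖`. Finally
`QPQ = ∑_x |x⟩⟨x| ⊗ |Φ⟩⟨Φ|x⟩⟨x|Φ⟩⟨Φ| = 2⁻ⁿ Q` because `|⟨x|Φ⟩|² = 2⁻ⁿ`, so `‖PQ‖ ≤ 2^{-n/2}`.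
-/

section CStarRing

variable {E : Type*} [NonUnitalNormedRing E] [StarRing E] [CStarRing E] {p q : E}

lemma IsStarProjection.norm_mul_sq (hp : IsStarProjection p) (hq : IsSelfAdjoint q) :
    ‖p * q‖ ^ 2 = ‖q * p * q‖ := by
  rw [sq, ← CStarRing.norm_star_mul_self, star_mul, hp.isSelfAdjoint.star_eq, hq.star_eq,
    ← mul_assoc, mul_assoc q, hp.isIdempotentElem.eq]

lemma IsSelfAdjoint.norm_mul_sub_mul_le (hp : IsSelfAdjoint p) (hq : IsSelfAdjoint q) :
    ‖p * q - q * p‖ ≤ 2 * ‖p * q‖ := by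
  have hqp : q * p = star (p * q) := by rw [star_mul, hp.star_eq, hq.star_eq]
  calc ‖p * q - q * p‖ ≤ ‖p * q‖ + ‖q * p‖ := norm_sub_le _ _
    _ = 2 * ‖p * q‖ := by rw [hqp, norm_star, two_mul]

lemma IsStarProjection.norm_mul_sub_mul_le_sqrt (hp : IsStarProjection p) (hq : IsSelfAdjoint q) :
    ‖p * q - q * p‖ ≤ 2 * √‖q * p * q‖ := by
  rw [← hp.norm_mul_sq hq, Real.sqrt_sq (norm_nonneg _)]
  exact hp.isSelfAdjoint.norm_mul_sub_mul_le hq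

end CStarRing

lemma Real.sqrt_inv_pow {b : ℝ} (hb : 0 ≤ b) (n : ℕ) : √((b ^ n)⁻¹) = b ^ (-(n : ℝ) / 2) := by
  rw [Real.sqrt_eq_rpow, ← Real.rpow_natCast, ← Real.rpow_neg hb, ← Real.rpow_mul hb]
  ring_nf

open Matrix

lemma Matrix.isStarProjection_diagonal {ι R : Type*} [Fintype ι] [DecidableEq ι] [Semiring R]
    [StarRing R] {d : ι → R} (hd : IsStarProjection d) : IsStarProjection (diagonal d) where
  isIdempotentElem := by
    rw [IsIdempotentElem, diagonal_mul_diagonal]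
    exact congrArg diagonal hd.isIdempotentElem.eq
  isSelfAdjoint := by
    rw [IsSelfAdjoint, star_eq_conjTranspose, diagonal_conjTranspose, hd.isSelfAdjoint.star_eq]

lemma eqProj_eq_diagonal (n : ℕ) :
    eqProj n = diagonal fun p => if p.1 = p.2 then 1 else 0 := by
  ext p q
  by_cases h : p = q <;> simp [eqProj, diagonal, h, eq_comm]

lemma isStarProjection_eqProj (n : ℕ) : IsStarProjection (eqProj n) := by
  rw [eqProj_eq_diagonal]
  refine isStarProjection_diagonal ((isStarProjection_iff' ..).2 ⟨?_, ?_⟩) <;>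
  · ext p
    split_ifs <;> simp [*]

lemma isStarProjection_unifProjY (n : ℕ) : IsStarProjection (unifProjY n) := by
  have h2n : (2 : ℂ) ^ n ≠ 0 := pow_ne_zero _ two_ne_zero
  have hcard : (Fintype.card (Fin n → Bool) : ℂ) = 2 ^ n := by simp
  rw [isStarProjection_iff']
  constructor
  · ext p q
    simp only [unifProjY, mul_apply, Fintype.sum_prod_type, mul_ite, ite_mul, zero_mul, mul_zero]
    rw [Finset.sum_comm]
    simp only [Finset.sum_ite_eq', Finset.mem_univ, if_true]
    split_ifs
    · rw [Finset.sum_const, Finset.card_univ, nsmul_eq_mul, hcard, mul_inv_cancel_left₀ h2n]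
    · exact Finset.sum_const_zero
  · ext p q
    simp [unifProjY, eq_comm, apply_ite (starRingEnd ℂ), map_inv₀, map_pow, map_ofNat]

lemma unifProjY_mul_eqProj_mul_unifProjY (n : ℕ) :
    unifProjY n * eqProj n * unifProjY n = ((2 : ℂ) ^ n)⁻¹ • unifProjY n := by
  ext p q
  rw [eqProj_eq_diagonal, mul_apply, Fintype.sum_prod_type]
  simp_rw [mul_diagonal, unifProjY]
  simp [unifProjY, mul_ite]

open scoped Matrix.Norms.L2Operator

/-- `‖[P⁼, 1_X ⊗ |Φ⟩⟨Φ|_Y]‖ ≤ 2·2^{−n/2}` (operator norm of the commutator). -/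
theorem stmt_3 (n : ℕ) :
    ‖Matrix.toEuclideanCLM (𝕜 := ℂ)
        (eqProj n * unifProjY n - unifProjY n * eqProj n)‖ ≤
      2 * (2 : ℝ) ^ (-(n : ℝ) / 2) := by
  have hQ := isStarProjection_unifProjY n
  have hQPQ : ‖unifProjY n * eqProj n * unifProjY n‖ ≤ ((2 : ℝ) ^ n)⁻¹ := by
    rw [unifProjY_mul_eqProj_mul_unifProjY, norm_smul, norm_inv, norm_pow, Complex.norm_ofNat]
    exact mul_le_of_le_one_right (by positivity) (hQ.norm_le _)
  rw [← cstar_norm_def, ← Real.sqrt_inv_pow zero_le_two]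
  calc _ ≤ 2 * √‖unifProjY n * eqProj n * unifProjY n‖ :=
        (isStarProjection_eqProj n).norm_mul_sub_mul_le_sqrt hQ.isSelfAdjoint
    _ ≤ 2 * √(((2 : ℝ) ^ n)⁻¹) := by gcongr
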